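/- The following are equivalent for two faces F, G of 𝒜: (i) F ⪯ G in the covector order; (ii) R(F) ∖ R(G) ⊆ Φ⁻ and R(G) ∖ R(F) ⊆ Φ⁺; (iii) R(F)⁺ ⊆ R(G)⁺ and R(F)⁻ ⊇ R(G)⁻. -/

import Mathlib

open scoped RealInnerProductSpace Pointwise

variable {V : Type*} [NormedAddCommGroup V] [InnerProductSpace ℝ V] [FiniteDimensional ℝ V]
  {ι : Type*} [Fintype ι]

/-- The (open) complement of the union of the hyperplanes with chosen normals `e i`. -/
def arrComplement (e : ι → V) : Set V := {v | ∀ i, ⟪e i, v⟫ ≠ 0}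

/-- A region of the arrangement: the closure of a connected component of the complement
of the union of the hyperplanes. -/
def IsRegion (e : ι → V) (R : Set V) : Prop :=
  ∃ x ∈ arrComplement e, R = closure (connectedComponentIn (arrComplement e) x)

/-- The positive closed half-space bounded by the hyperplane with normal `e i`. -/
def posHalf (e : ι → V) (i : ι) : Set V := {v | 0 ≤ ⟪e i, v⟫}

/-- The negative closed half-space bounded by the hyperplane with normal `e i`. -/
def negHalf (e : ι → V) (i : ι) : Set V := {v | ⟪e i, v⟫ ≤ 0}

/-- The separation set of two regions: the (indices of) hyperplanes such that the two
regions lie in opposite closed half-spaces. -/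
def sepSet (e : ι → V) (R R' : Set V) : Set ι :=
  {i | (R ⊆ posHalf e i ∧ R' ⊆ negHalf e i) ∨ (R ⊆ negHalf e i ∧ R' ⊆ posHalf e i)}

/-- The order of the poset of regions `PR(𝒜,B)`. -/
def PRle (e : ι → V) (B R R' : Set V) : Prop := sepSet e B R ⊆ sepSet e B R'

/-- Strict order of the poset of regions. -/
def PRlt (e : ι → V) (B R R' : Set V) : Prop := PRle e B R R' ∧ R ≠ R'

/-- Cover relation in the poset of regions. -/
def PRcover (e : ι → V) (B R R' : Set V) : Prop :=
  PRlt e B R R' ∧ ¬ ∃ U, IsRegion e U ∧ PRlt e B R U ∧ PRlt e B U R'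

/-- A face of the arrangement: an intersection of a nonempty collection of regions. -/
def IsFace (e : ι → V) (F : Set V) : Prop :=
  ∃ Rs : Set (Set V), Rs.Nonempty ∧ (∀ R ∈ Rs, IsRegion e R) ∧ F = ⋂₀ Rs

/-- `[m, M]` is the facial interval of the face `F` in the poset of regions:
the regions containing `F` are exactly those between `m` and `M`. -/
def IsFacialInterval (e : ι → V) (B F m M : Set V) : Prop :=
  IsRegion e m ∧ IsRegion e M ∧
    ∀ R, IsRegion e R → (F ⊆ R ↔ (PRle e B m R ∧ PRle e B R M))

/-- The facial weak order `FW(𝒜,B)`: `F ≤ G` iff `m_F ≤ m_G` and `M_F ≤ M_G`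
in the poset of regions. -/
def FWle (e : ι → V) (B F G : Set V) : Prop :=
  ∃ mF MF mG MG, IsFacialInterval e B F mF MF ∧ IsFacialInterval e B G mG MG ∧
    PRle e B mF mG ∧ PRle e B MF MG

/-- Strict facial weak order. -/
def FWlt (e : ι → V) (B F G : Set V) : Prop := FWle e B F G ∧ F ≠ G

/-- Cover relation in the facial weak order. -/
def FWcover (e : ι → V) (B F G : Set V) : Prop :=
  FWlt e B F G ∧ ¬ ∃ X, IsFace e X ∧ FWlt e B F X ∧ FWlt e B X G

/-- Two faces have the same maximal region `M` of their facial intervals. -/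
def SameMax (e : ι → V) (B F G : Set V) : Prop :=
  ∃ m m' M, IsFacialInterval e B F m M ∧ IsFacialInterval e B G m' M

/-- Two faces have the same minimal region `m` of their facial intervals. -/
def SameMin (e : ι → V) (B F G : Set V) : Prop :=
  ∃ m M M', IsFacialInterval e B F m M ∧ IsFacialInterval e B G m M'

/-- The dimension of a face: the dimension of its linear span. -/
noncomputable def fdim (F : Set V) : ℕ := Module.finrank ℝ (Submodule.span ℝ F)

open Classical in
/-- The covector (sign vector) of a face: the sign of `⟪e i, x⟫` for `x` in the
relative interior of the face. -/
noncomputable def covec (e : ι → V) (F : Set V) (i : ι) : SignType :=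
  if ∀ x ∈ intrinsicInterior ℝ F, 0 < ⟪e i, x⟫ then 1
  else if ∀ x ∈ intrinsicInterior ℝ F, ⟪e i, x⟫ < 0 then -1
  else 0

/-- Composition of sign vectors. -/
def scomp (f g : ι → SignType) (i : ι) : SignType := if f i ≠ 0 then f i else g i

/-- The set of roots of the arrangement: the chosen normals and their opposites. -/
def roots (e : ι → V) : Set V := Set.range e ∪ Set.range (fun i => -(e i))

/-- The root inversion set of a face. -/
def rootInv (e : ι → V) (F : Set V) : Set V :=
  {v ∈ roots e | ∃ x ∈ intrinsicInterior ℝ F, ⟪x, v⟫ ≤ 0}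

/-- `H i` is a wall of the region `R`. -/
noncomputable def IsWall (e : ι → V) (R : Set V) (i : ι) : Prop :=
  fdim ({v : V | ⟪e i, v⟫ = 0} ∩ R) = Module.finrank ℝ V - 1

/-- A region is simplicial when the normal vectors of its walls are linearly independent. -/
def IsSimplicialRegion (e : ι → V) (R : Set V) : Prop :=
  LinearIndependent ℝ (fun i : {i : ι // IsWall e R i} => e i.1)

/-- The arrangement is simplicial when all its regions are. -/
def IsSimplicial (e : ι → V) : Prop := ∀ R, IsRegion e R → IsSimplicialRegion e R

/-- The arrangement is essential when the intersection of all its hyperplanes is `{0}`. -/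
def IsEssential (e : ι → V) : Prop := (⋂ i, {v : V | ⟪e i, v⟫ = 0}) = ({0} : Set V)

/-- The poset of regions is a lattice: any two regions have a join and a meet. -/
def PRIsLattice (e : ι → V) (B : Set V) : Prop :=
  ∀ R R', IsRegion e R → IsRegion e R' →
    (∃ J, IsRegion e J ∧ PRle e B R J ∧ PRle e B R' J ∧
      ∀ U, IsRegion e U → PRle e B R U → PRle e B R' U → PRle e B J U) ∧
    (∃ M, IsRegion e M ∧ PRle e B M R ∧ PRle e B M R' ∧
      ∀ U, IsRegion e U → PRle e B U R → PRle e B U R' → PRle e B U M)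

/-!
On the relative interior of a face `F` every linear form `⟪e i, ·⟫` has constant sign: `F` lies in
a closed half-space of the hyperplane, and a relative interior point `x` can be pushed slightly
past itself, to `x + t • (x - y)`, away from any other point `y` of `F`. So `covec e F i` is that
sign, `e i ∈ R(F)` iff `covec e F i ≠ 1`, and `-e i ∈ R(F)` iff `covec e F i ≠ -1`; comparing
signs coordinatewise gives (i) ⇔ (iii). Since the base region has a point at which every `e i`
is positive, `Φ⁺` and `Φ⁻` are disjoint, which turns (iii) into (ii).
-/

section RelativeInterior

variable {E : Type*} [NormedAddCommGroup E] [NormedSpace ℝ E] {s : Set E} {x y : E}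

theorem exists_pos_add_smul_sub_mem_of_mem_intrinsicInterior
    (hx : x ∈ intrinsicInterior ℝ s) (hy : y ∈ affineSpan ℝ s) :
    ∃ t > (0 : ℝ), x + t • (x - y) ∈ s := by
  obtain ⟨z, hz, rfl⟩ := hx
  let c : ℝ → affineSpan ℝ s := fun t =>
    ⟨t • ((z : E) - y) + z, AffineSubspace.smul_vsub_vadd_mem _ t z.2 hy z.2⟩
  have hc : Continuous c := Continuous.subtype_mk (by fun_prop) _
  have hc0 : c 0 = z := by ext; simp [c]
  have hnear : ∀ᶠ t in nhdsWithin (0 : ℝ) (Set.Ioi 0), c t ∈ interior ((↑) ⁻¹' s) :=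
    ((hc.tendsto 0).mono_left nhdsWithin_le_nhds).eventually
      (isOpen_interior.mem_nhds (hc0 ▸ hz))
  obtain ⟨t, ht, htmem⟩ := (eventually_mem_nhdsWithin.and hnear).exists
  exact ⟨t, ht, by simpa [c, add_comm] using interior_subset htmem⟩

theorem LinearMap.apply_eq_zero_of_nonneg_of_mem_intrinsicInterior (f : E →ₗ[ℝ] ℝ)
    (hf : ∀ y ∈ s, 0 ≤ f y) (hx : x ∈ intrinsicInterior ℝ s) (hfx : f x = 0) (hy : y ∈ s) :
    f y = 0 := by
  obtain ⟨t, ht, hmem⟩ :=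
    exists_pos_add_smul_sub_mem_of_mem_intrinsicInterior hx (subset_affineSpan ℝ s hy)
  have : 0 ≤ -t * f y := by simpa [hfx] using hf _ hmem
  exact le_antisymm (nonpos_of_mul_nonneg_right this (neg_neg_of_pos ht)) (hf y hy)

theorem LinearMap.sign_apply_eq_of_mem_intrinsicInterior (f : E →ₗ[ℝ] ℝ)
    (hf : (∀ y ∈ s, 0 ≤ f y) ∨ ∀ y ∈ s, f y ≤ 0)
    (hx : x ∈ intrinsicInterior ℝ s) (hy : y ∈ intrinsicInterior ℝ s) :
    SignType.sign (f x) = SignType.sign (f y) := by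
  wlog hpos : ∀ y ∈ s, 0 ≤ f y generalizing f
  · have hneg := this (-f) (Or.inl fun y hy => by simpa using hf.resolve_left hpos y hy)
      fun y hy => by simpa using hf.resolve_left hpos y hy
    simpa [Left.sign_neg] using hneg
  have hzero : f x = 0 ↔ f y = 0 :=
    ⟨fun h => f.apply_eq_zero_of_nonneg_of_mem_intrinsicInterior hpos hx h
        (intrinsicInterior_subset hy),
      fun h => f.apply_eq_zero_of_nonneg_of_mem_intrinsicInterior hpos hy h
        (intrinsicInterior_subset hx)⟩
  rcases (hpos x (intrinsicInterior_subset hx)).eq_or_lt with h | h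
  · rw [← h, hzero.mp h.symm]
  · rw [sign_pos h, sign_pos ((hpos y (intrinsicInterior_subset hy)).lt_of_ne
      (Ne.symm (mt hzero.mpr h.ne')))]

end RelativeInterior

theorem Set.diff_subset_iff_inter_subset_of_subset_union {α : Type*} {A C P N : Set α}
    (hA : A ⊆ P ∪ N) (hPN : Disjoint P N) : A \ C ⊆ N ↔ A ∩ P ⊆ C := by
  constructor
  · rintro h v ⟨hvA, hvP⟩
    by_contra hvC
    exact hPN.ne_of_mem hvP (h ⟨hvA, hvC⟩) rfl
  · rintro h v ⟨hvA, hvC⟩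
    exact (hA hvA).resolve_left fun hvP => hvC (h ⟨hvA, hvP⟩)

section Arrangement

omit [FiniteDimensional ℝ V] [Fintype ι]

variable {e : ι → V}

theorem convex_setOf_forall_mul_inner_pos (x : V) :
    Convex ℝ {v | ∀ i, 0 < ⟪e i, x⟫ * ⟪e i, v⟫} := by
  rw [Set.ofPred_forall]
  exact convex_iInter fun i => convex_halfSpace_gt (⟪e i, x⟫ • innerₗ V (e i)).isLinear 0

theorem connectedComponentIn_arrComplement {x : V} (hx : x ∈ arrComplement e) :
    connectedComponentIn (arrComplement e) x = {v | ∀ i, 0 < ⟪e i, x⟫ * ⟪e i, v⟫} := by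
  apply Set.Subset.antisymm
  · intro v hv i
    by_contra! hle
    have hIcc := isPreconnected_connectedComponentIn.intermediate_value hv
      (mem_connectedComponentIn hx) (f := fun w => ⟪e i, x⟫ * ⟪e i, w⟫) (by fun_prop)
    obtain ⟨w, hw, hw0⟩ := hIcc ⟨hle, (mul_self_pos.mpr (hx i)).le⟩
    exact connectedComponentIn_subset _ _ hw i
      ((mul_eq_zero.mp hw0).resolve_left (hx i))
  · refine IsPreconnected.subset_connectedComponentIn ?_ (fun i => mul_self_pos.mpr (hx i))
      fun v hv i h => by simpa [h] using hv i
    exact (convex_setOf_forall_mul_inner_pos x).isPreconnected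

theorem IsRegion.convex {R : Set V} (hR : IsRegion e R) : Convex ℝ R := by
  obtain ⟨x, hx, rfl⟩ := hR
  rw [connectedComponentIn_arrComplement hx]
  exact (convex_setOf_forall_mul_inner_pos x).closure

theorem IsRegion.zero_mem {R : Set V} (hR : IsRegion e R) : (0 : V) ∈ R := by
  obtain ⟨x, hx, rfl⟩ := hR
  rw [connectedComponentIn_arrComplement hx]
  refine mem_closure_of_tendsto (f := fun t : ℝ => t • x) (b := nhdsWithin 0 (Set.Ioi 0))
    ?_ (eventually_mem_nhdsWithin.mono fun t (ht : 0 < t) i => ?_)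
  · exact ((continuous_id.smul continuous_const).tendsto' 0 0 (zero_smul ℝ x)).mono_left
      nhdsWithin_le_nhds
  · rw [inner_smul_right, mul_left_comm]
    exact mul_pos ht (mul_self_pos.mpr (hx i))

theorem IsRegion.subset_posHalf_or_subset_negHalf {R : Set V} (hR : IsRegion e R) (i : ι) :
    R ⊆ posHalf e i ∨ R ⊆ negHalf e i := by
  obtain ⟨x, hx, rfl⟩ := hR
  have hsub : closure (connectedComponentIn (arrComplement e) x) ⊆
      {v | 0 ≤ ⟪e i, x⟫ * ⟪e i, v⟫} := by
    refine closure_minimal (fun v hv => ?_) (isClosed_le continuous_const (by fun_prop))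
    rw [connectedComponentIn_arrComplement hx] at hv
    exact (hv i).le
  rcases (hx i).lt_or_gt with hneg | hpos
  · exact Or.inr fun v hv => nonpos_of_mul_nonneg_right (hsub hv) hneg
  · exact Or.inl fun v hv => nonneg_of_mul_nonneg_right (hsub hv) hpos

theorem IsFace.convex {F : Set V} (hF : IsFace e F) : Convex ℝ F := by
  obtain ⟨Rs, -, hRs, rfl⟩ := hF
  exact convex_sInter fun R hR => (hRs R hR).convex

theorem IsFace.zero_mem {F : Set V} (hF : IsFace e F) : (0 : V) ∈ F := by
  obtain ⟨Rs, -, hRs, rfl⟩ := hF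
  exact Set.mem_sInter.mpr fun R hR => (hRs R hR).zero_mem

theorem IsFace.subset_posHalf_or_subset_negHalf {F : Set V} (hF : IsFace e F) (i : ι) :
    F ⊆ posHalf e i ∨ F ⊆ negHalf e i := by
  obtain ⟨Rs, ⟨R, hR⟩, hRs, rfl⟩ := hF
  exact ((hRs R hR).subset_posHalf_or_subset_negHalf i).imp
    (Set.sInter_subset_of_mem hR).trans (Set.sInter_subset_of_mem hR).trans

theorem rootInv_subset_roots (F : Set V) : rootInv e F ⊆ roots e := fun _ hv => hv.1

theorem disjoint_range_neg_of_isRegion_subset_posHalf {B : Set V} (hB : IsRegion e B)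
    (hBpos : ∀ i, B ⊆ posHalf e i) : Disjoint (Set.range e) (Set.range fun i => -(e i)) := by
  obtain ⟨x, hx, rfl⟩ := hB
  have hxB := subset_closure (mem_connectedComponentIn hx)
  rw [Set.disjoint_left]
  rintro _ ⟨i, rfl⟩ ⟨j, hji⟩
  have hi : 0 ≤ ⟪e i, x⟫ := hBpos i hxB
  rw [← hji, inner_neg_left, neg_nonneg] at hi
  exact hx j (le_antisymm hi (hBpos j hxB))

end Arrangement

section Covector

omit [Fintype ι]

variable {e : ι → V} {F : Set V}

theorem IsFace.intrinsicInterior_nonempty (hF : IsFace e F) :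
    (intrinsicInterior ℝ F).Nonempty :=
  Set.Nonempty.intrinsicInterior hF.convex ⟨0, hF.zero_mem⟩

omit [FiniteDimensional ℝ V] in
theorem IsFace.covec_eq_sign (hF : IsFace e F) {x : V} (hx : x ∈ intrinsicInterior ℝ F)
    (i : ι) : covec e F i = SignType.sign ⟪e i, x⟫ := by
  have hconst : ∀ y ∈ intrinsicInterior ℝ F, SignType.sign ⟪e i, y⟫ = SignType.sign ⟪e i, x⟫ :=
    fun y hy => (innerₗ V (e i)).sign_apply_eq_of_mem_intrinsicInterior
      (hF.subset_posHalf_or_subset_negHalf i) hy hx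
  unfold covec
  split_ifs with hpos hneg
  · exact (sign_pos (hpos x hx)).symm
  · exact (sign_neg (hneg x hx)).symm
  · rcases lt_trichotomy ⟪e i, x⟫ 0 with h | h | h
    · exact absurd (fun y hy => sign_eq_neg_one_iff.mp ((hconst y hy).trans (sign_neg h))) hneg
    · rw [h, sign_zero]
    · exact absurd (fun y hy => sign_eq_one_iff.mp ((hconst y hy).trans (sign_pos h))) hpos

theorem IsFace.mem_rootInv_iff (hF : IsFace e F) (i : ι) :
    e i ∈ rootInv e F ↔ covec e F i ≠ 1 := by
  obtain ⟨x₀, hx₀⟩ := hF.intrinsicInterior_nonempty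
  simp only [rootInv, roots, Set.mem_ofPred_eq, Set.mem_union, Set.mem_range_self, true_or,
    true_and, real_inner_comm (e i)]
  constructor
  · rintro ⟨x, hx, hle⟩
    rw [hF.covec_eq_sign hx, Ne, sign_eq_one_iff]
    exact hle.not_gt
  · intro h
    rw [hF.covec_eq_sign hx₀, Ne, sign_eq_one_iff, not_lt] at h
    exact ⟨x₀, hx₀, h⟩

theorem IsFace.neg_mem_rootInv_iff (hF : IsFace e F) (i : ι) :
    -e i ∈ rootInv e F ↔ covec e F i ≠ -1 := by
  obtain ⟨x₀, hx₀⟩ := hF.intrinsicInterior_nonempty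
  simp only [rootInv, roots, Set.mem_ofPred_eq, Set.mem_union, Set.mem_range_self, or_true,
    true_and, inner_neg_right, neg_nonpos, real_inner_comm (e i)]
  constructor
  · rintro ⟨x, hx, hle⟩
    rw [hF.covec_eq_sign hx, Ne, sign_eq_neg_one_iff]
    exact hle.not_gt
  · intro h
    rw [hF.covec_eq_sign hx₀, Ne, sign_eq_neg_one_iff, not_lt] at h
    exact ⟨x₀, hx₀, h⟩

theorem covec_le_iff_rootInv {G : Set V} (hF : IsFace e F) (hG : IsFace e G) :
    (∀ i, covec e G i ≤ covec e F i) ↔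
      rootInv e F ∩ Set.range e ⊆ rootInv e G ∧
        rootInv e G ∩ Set.range (fun i => -(e i)) ⊆ rootInv e F := by
  have hsign : ∀ a b : SignType, b ≤ a ↔ (a ≠ 1 → b ≠ 1) ∧ (b ≠ -1 → a ≠ -1) := by decide
  rw [Set.inter_comm, Set.inter_comm (rootInv e G)]
  simp only [Set.subset_def, Set.mem_inter_iff, and_imp, Set.forall_mem_range,
    hF.mem_rootInv_iff, hG.mem_rootInv_iff, hF.neg_mem_rootInv_iff, hG.neg_mem_rootInv_iff,
    ← forall_and, hsign]

end Covector

theorem stmt13_general (e : ι → V) (B : Set V)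
    (hB : IsRegion e B) (hBpos : ∀ i, B ⊆ posHalf e i)
    (F G : Set V) (hF : IsFace e F) (hG : IsFace e G) :
    ((∀ i, covec e G i ≤ covec e F i) ↔
      (rootInv e F \ rootInv e G ⊆ Set.range (fun i => -(e i)) ∧
        rootInv e G \ rootInv e F ⊆ Set.range e)) ∧
    ((∀ i, covec e G i ≤ covec e F i) ↔
      (rootInv e F ∩ Set.range e ⊆ rootInv e G ∩ Set.range e ∧
        rootInv e G ∩ Set.range (fun i => -(e i)) ⊆
          rootInv e F ∩ Set.range (fun i => -(e i)))) := by
  have hdisj := disjoint_range_neg_of_isRegion_subset_posHalf hB hBpos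
  refine ⟨(covec_le_iff_rootInv hF hG).trans ?_, (covec_le_iff_rootInv hF hG).trans ?_⟩
  · rw [Set.diff_subset_iff_inter_subset_of_subset_union (rootInv_subset_roots F) hdisj,
      Set.diff_subset_iff_inter_subset_of_subset_union
        ((rootInv_subset_roots G).trans (Set.union_comm _ _).subset) hdisj.symm]
  · simp only [Set.subset_inter_iff, Set.inter_subset_right, and_true]

/-- The covector order is equivalent to the two root-inversion-set conditions. -/
theorem stmt13 (e : ι → V) (hne : ∀ i, e i ≠ 0) (B : Set V)
    (hB : IsRegion e B) (hBpos : ∀ i, B ⊆ posHalf e i)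
    (F G : Set V) (hF : IsFace e F) (hG : IsFace e G) :
    ((∀ i, covec e G i ≤ covec e F i) ↔
      (rootInv e F \ rootInv e G ⊆ Set.range (fun i => -(e i)) ∧
        rootInv e G \ rootInv e F ⊆ Set.range e)) ∧
    ((∀ i, covec e G i ≤ covec e F i) ↔
      (rootInv e F ∩ Set.range e ⊆ rootInv e G ∩ Set.range e ∧
        rootInv e G ∩ Set.range (fun i => -(e i)) ⊆
          rootInv e F ∩ Set.range (fun i => -(e i)))) :=
  stmt13_general e B hB hBpos F G hF hG
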